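/- arXiv:2309.09235 — 5 statements merged into one kernel-verified Lean document; each statement's English description precedes it below -/
import Mathlib

section
/- Let b, b' ∈ ℝ with b > β ≥ 0 and b' ≤ β, and suppose |tanh(b) − tanh(b')| ≤ ε with tanh(β) + ε < 1. Then b ≤ β + ε/(1 − (tanh(β) + ε)²). -/
/-!
On `[β, b] ⊆ [0, ∞)` the derivative `1 - tanh² t` of `tanh` is smallest at `t = b`, so the mean
value theorem gives `(b - β) (1 - tanh² b) ≤ tanh b - tanh β ≤ tanh b - tanh b' ≤ ε`, while
`0 ≤ tanh b ≤ tanh β + ε` bounds the factor `1 - tanh² b` from below by `1 - (tanh β + ε)²`.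
-/

namespace Real

theorem hasDerivAt_tanh (x : ℝ) : HasDerivAt tanh (1 - tanh x ^ 2) x := by
  have h := (hasDerivAt_sinh x).div (hasDerivAt_cosh x) (cosh_pos x).ne'
  have hquot : (sinh / cosh) = tanh := funext fun y => (tanh_eq_sinh_div_cosh y).symm
  rw [hquot] at h
  refine h.congr_deriv ?_
  rw [tanh_eq_sinh_div_cosh]
  field_simp

theorem deriv_tanh (x : ℝ) : deriv tanh x = 1 - tanh x ^ 2 :=
  (hasDerivAt_tanh x).deriv

theorem tanh_strictMono : StrictMono tanh := fun x y hxy => by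
  have hmem (z : ℝ) : tanh z ∈ Set.Ioo (-1) 1 := ⟨neg_one_lt_tanh z, tanh_lt_one z⟩
  rwa [← strictMonoOn_artanh.lt_iff_lt (hmem x) (hmem y), artanh_tanh, artanh_tanh]

theorem tanh_nonneg {x : ℝ} (hx : 0 ≤ x) : 0 ≤ tanh x := by
  simpa only [tanh_zero] using tanh_strictMono.monotone hx

theorem sub_mul_one_sub_tanh_sq_le_tanh_sub {a b : ℝ} (ha : 0 ≤ a) (hab : a ≤ b) :
    (b - a) * (1 - tanh b ^ 2) ≤ tanh b - tanh a := by
  have hderiv : ∀ t ∈ interior (Set.Icc a b), 1 - tanh b ^ 2 ≤ deriv tanh t := by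
    rw [interior_Icc]
    rintro t ⟨hat, htb⟩
    have ht : 0 ≤ tanh t := tanh_nonneg (ha.trans hat.le)
    have htb : tanh t ≤ tanh b := tanh_strictMono.monotone htb.le
    rw [deriv_tanh]
    nlinarith
  rw [mul_comm]
  exact (convex_Icc a b).mul_sub_le_image_sub_of_le_deriv
    (fun t _ => (hasDerivAt_tanh t).continuousAt.continuousWithinAt)
    (fun t _ => (hasDerivAt_tanh t).differentiableAt.differentiableWithinAt)
    hderiv a (Set.left_mem_Icc.mpr hab) b (Set.right_mem_Icc.mpr hab) hab

end Real

theorem stmt_9 (b b' β ε : ℝ) (hβ : 0 ≤ β) (hb : β < b) (hb' : b' ≤ β)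
    (h : |Real.tanh b - Real.tanh b'| ≤ ε) (hε : Real.tanh β + ε < 1) :
    b ≤ β + ε / (1 - (Real.tanh β + ε) ^ 2) := by
  set t := Real.tanh β + ε
  have hb'β : Real.tanh b' ≤ Real.tanh β := Real.tanh_strictMono.monotone hb'
  have htanh_b : Real.tanh b ≤ t := by linarith [(abs_le.mp h).2]
  have htanh_b_nonneg : 0 ≤ Real.tanh b := Real.tanh_nonneg (hβ.trans hb.le)
  have hpos : 0 < 1 - t ^ 2 := by nlinarith
  have hkey : (b - β) * (1 - t ^ 2) ≤ ε :=
    calc (b - β) * (1 - t ^ 2) ≤ (b - β) * (1 - Real.tanh b ^ 2) := by gcongr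
      _ ≤ Real.tanh b - Real.tanh β := Real.sub_mul_one_sub_tanh_sq_le_tanh_sub hβ hb.le
      _ ≤ ε := by linarith
  rw [← sub_le_iff_le_add', le_div_iff₀ hpos]
  exact hkey
end

section
/- Let q, q* : S → ℝ be functions on a finite set S with sup_{x ∈ S} |q(x) − q*(x)| ≤ Δ, and let p, p* be the associated Gibbs distributions p(x) = e^{q(x)}/∑e^{q}, p*(x) = e^{q*(x)}/∑e^{q*}. Then ∑_{x ∈ S} |p(x) − p*(x)| ≤ 4Δ. -/
open Finset

private lemma exp_sub_le' {a b : ℝ} (hab : b ≤ a) :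
    Real.exp a - Real.exp b ≤ (a - b) * Real.exp a := by
  have h1 : b - a + 1 ≤ Real.exp (b - a) := Real.add_one_le_exp _
  have h2 : Real.exp (b - a) * Real.exp a = Real.exp b := by
    rw [← Real.exp_add]; ring_nf
  nlinarith [Real.exp_pos a]

private lemma abs_exp_sub' (a b : ℝ) :
    |Real.exp a - Real.exp b| ≤ |a - b| * (Real.exp a + Real.exp b) := by
  rcases le_total b a with hab | hab
  · rw [abs_of_nonneg (sub_nonneg.2 (Real.exp_le_exp.2 hab)),
      abs_of_nonneg (sub_nonneg.2 hab)]
    nlinarith [exp_sub_le' hab, Real.exp_pos b, sub_nonneg.2 hab]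
  · rw [abs_sub_comm, abs_sub_comm a b,
      abs_of_nonneg (sub_nonneg.2 (Real.exp_le_exp.2 hab)),
      abs_of_nonneg (sub_nonneg.2 hab)]
    nlinarith [exp_sub_le' hab, Real.exp_pos a, sub_nonneg.2 hab]

private lemma gibbs_key (S : Type*) [Fintype S] [Nonempty S] (q qs : S → ℝ) (Δ : ℝ)
    (h : ∀ x, |q x - qs x| ≤ Δ)
    (hZ : ∑ y : S, Real.exp (qs y) ≤ ∑ y : S, Real.exp (q y)) :
    ∑ x : S, |Real.exp (q x) / (∑ y : S, Real.exp (q y)) -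
        Real.exp (qs x) / (∑ y : S, Real.exp (qs y))| ≤ 4 * Δ := by
  set Z := ∑ y : S, Real.exp (q y) with hZdef
  set Zs := ∑ y : S, Real.exp (qs y) with hZsdef
  have hZpos : 0 < Z := Finset.sum_pos (fun i _ => Real.exp_pos _) univ_nonempty
  have hZspos : 0 < Zs := Finset.sum_pos (fun i _ => Real.exp_pos _) univ_nonempty
  have hΔ : 0 ≤ Δ := le_trans (abs_nonneg _) (h (Classical.arbitrary S))
  set D := ∑ x : S, |Real.exp (q x) - Real.exp (qs x)| with hDdef
  have hDnn : 0 ≤ D := Finset.sum_nonneg fun x _ => abs_nonneg _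
  have hdiff : D ≤ 2 * Δ * Z := by
    calc D ≤ ∑ x : S, Δ * (Real.exp (q x) + Real.exp (qs x)) := by
            apply Finset.sum_le_sum
            intro x _
            exact le_trans (abs_exp_sub' _ _)
              (mul_le_mul_of_nonneg_right (h x) (by positivity))
      _ = Δ * (Z + Zs) := by rw [← Finset.mul_sum, Finset.sum_add_distrib]
      _ ≤ 2 * Δ * Z := by nlinarith
  have hZZs : Z - Zs ≤ D := by
    rw [hDdef, hZdef, hZsdef, ← Finset.sum_sub_distrib]
    exact Finset.sum_le_sum fun x _ => le_abs_self _
  have step : ∀ x : S, |Real.exp (q x) / Z - Real.exp (qs x) / Zs|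
      ≤ |Real.exp (q x) - Real.exp (qs x)| / Z
        + Real.exp (qs x) * ((Z - Zs) / (Z * Zs)) := by
    intro x
    have heq : Real.exp (q x) / Z - Real.exp (qs x) / Zs
        = (Real.exp (q x) - Real.exp (qs x)) / Z
          + Real.exp (qs x) * ((Zs - Z) / (Z * Zs)) := by
      field_simp; ring
    rw [heq]
    refine le_trans (abs_add_le _ _) ?_
    gcongr
    · rw [abs_div, abs_of_pos hZpos]
    · rw [abs_mul, abs_of_pos (Real.exp_pos _), abs_div,
        abs_of_pos (by positivity : (0:ℝ) < Z * Zs), abs_sub_comm,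
        abs_of_nonneg (sub_nonneg.2 hZ)]
  calc ∑ x : S, |Real.exp (q x) / Z - Real.exp (qs x) / Zs|
      ≤ ∑ x : S, (|Real.exp (q x) - Real.exp (qs x)| / Z
          + Real.exp (qs x) * ((Z - Zs) / (Z * Zs))) :=
        Finset.sum_le_sum fun x _ => step x
    _ = D / Z + Zs * ((Z - Zs) / (Z * Zs)) := by
        rw [Finset.sum_add_distrib, ← Finset.sum_div, ← Finset.sum_mul]
    _ = D / Z + (Z - Zs) / Z := by
        congr 1
        field_simp
    _ = (D + (Z - Zs)) / Z := by rw [add_div]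
    _ ≤ 4 * Δ := by
        rw [div_le_iff₀ hZpos]
        nlinarith

theorem stmt_12 (S : Type*) [Fintype S] [Nonempty S] (q qs : S → ℝ) (Δ : ℝ)
    (h : ∀ x, |q x - qs x| ≤ Δ) :
    ∑ x : S, |Real.exp (q x) / (∑ y : S, Real.exp (q y)) -
        Real.exp (qs x) / (∑ y : S, Real.exp (qs y))| ≤ 4 * Δ := by
  rcases le_total (∑ y : S, Real.exp (qs y)) (∑ y : S, Real.exp (q y)) with hZ | hZ
  · exact gibbs_key S q qs Δ h hZ
  · have h' : ∀ x, |qs x - q x| ≤ Δ := fun x => by rw [abs_sub_comm]; exact h x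
    have := gibbs_key S qs q Δ h' hZ
    calc ∑ x : S, |Real.exp (q x) / (∑ y : S, Real.exp (q y)) -
          Real.exp (qs x) / (∑ y : S, Real.exp (qs y))|
        = ∑ x : S, |Real.exp (qs x) / (∑ y : S, Real.exp (qs y)) -
          Real.exp (q x) / (∑ y : S, Real.exp (q y))| := by
          simp_rw [abs_sub_comm]
      _ ≤ 4 * Δ := this
end

section
/- For potentials q, q* : T → ℝ on a finite set T with sup_t |q(t) − q*(t)| ≤ Δ, the softmax probabilities p(t) = e^{q(t)}/∑_{s} e^{q(s)} and p*(t) = e^{q*(t)}/∑_s e^{q*(s)} satisfy |p(t) − p*(t)| ≤ 4Δ for every t ∈ T. -/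
lemma exp_sub_exp_abs (u v : ℝ) :
    |Real.exp u - Real.exp v| ≤ (Real.exp u + Real.exp v) * |u - v| := by
  wlog hvu : v ≤ u generalizing u v
  · rw [abs_sub_comm u v, abs_sub_comm (Real.exp u), add_comm (Real.exp u)]
    exact this v u (le_of_not_ge hvu)
  have h1 : Real.exp u * (1 + (v - u)) ≤ Real.exp v := by
    have h2 := Real.add_one_le_exp (v - u)
    have h3 : Real.exp u * (1 + (v - u)) ≤ Real.exp u * Real.exp (v - u) := by
      nlinarith [Real.exp_pos u]
    have h4 : Real.exp u * Real.exp (v - u) = Real.exp v := by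
      rw [← Real.exp_add]; ring_nf
    linarith
  rw [abs_of_nonneg (sub_nonneg.2 (Real.exp_le_exp.2 hvu)),
    abs_of_nonneg (sub_nonneg.2 hvu)]
  nlinarith [Real.exp_pos u, Real.exp_pos v]

theorem stmt_14 (T : Type*) [Fintype T] [Nonempty T] (q qs : T → ℝ) (Δ : ℝ)
    (h : ∀ t, |q t - qs t| ≤ Δ) (t : T) :
    |Real.exp (q t) / (∑ s : T, Real.exp (q s)) -
      Real.exp (qs t) / (∑ s : T, Real.exp (qs s))| ≤ 4 * Δ := by
  have hΔ : 0 ≤ Δ := le_trans (abs_nonneg _) (h (Classical.arbitrary T))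
  set A := ∑ s : T, Real.exp (q s) with hAdef
  set B := ∑ s : T, Real.exp (qs s) with hBdef
  have hA : 0 < A := Finset.sum_pos (fun s _ => Real.exp_pos _) Finset.univ_nonempty
  have hB : 0 < B := Finset.sum_pos (fun s _ => Real.exp_pos _) Finset.univ_nonempty
  have hqA : Real.exp (q t) ≤ A :=
    Finset.single_le_sum (f := fun s => Real.exp (q s))
      (fun s _ => (Real.exp_pos _).le) (Finset.mem_univ t)
  have hqB : Real.exp (qs t) ≤ B :=
    Finset.single_le_sum (f := fun s => Real.exp (qs s))
      (fun s _ => (Real.exp_pos _).le) (Finset.mem_univ t)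
  have key : |Real.exp (q t) * B - Real.exp (qs t) * A| ≤
      2 * Δ * (Real.exp (q t) * B + Real.exp (qs t) * A) := by
    have hrw : Real.exp (q t) * B - Real.exp (qs t) * A =
        ∑ s : T, (Real.exp (q t + qs s) - Real.exp (qs t + q s)) := by
      rw [hAdef, hBdef, Finset.mul_sum, Finset.mul_sum, ← Finset.sum_sub_distrib]
      congr 1; ext s; rw [Real.exp_add, Real.exp_add]
    rw [hrw]
    calc |∑ s : T, (Real.exp (q t + qs s) - Real.exp (qs t + q s))|
        ≤ ∑ s : T, |Real.exp (q t + qs s) - Real.exp (qs t + q s)| :=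
          Finset.abs_sum_le_sum_abs _ _
      _ ≤ ∑ s : T, (Real.exp (q t + qs s) + Real.exp (qs t + q s)) * (2 * Δ) := by
          apply Finset.sum_le_sum
          intro s _
          have h1 := exp_sub_exp_abs (q t + qs s) (qs t + q s)
          have h2 : |(q t + qs s) - (qs t + q s)| ≤ 2 * Δ := by
            have ha := h t
            have hb := h s
            have : (q t + qs s) - (qs t + q s) = (q t - qs t) - (q s - qs s) := by ring
            rw [this]
            calc |(q t - qs t) - (q s - qs s)| ≤ |q t - qs t| + |q s - qs s| :=
              abs_sub _ _
            _ ≤ 2 * Δ := by linarith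
          calc |Real.exp (q t + qs s) - Real.exp (qs t + q s)|
              ≤ (Real.exp (q t + qs s) + Real.exp (qs t + q s)) *
                |(q t + qs s) - (qs t + q s)| := h1
            _ ≤ (Real.exp (q t + qs s) + Real.exp (qs t + q s)) * (2 * Δ) := by
                apply mul_le_mul_of_nonneg_left h2
                positivity
      _ = 2 * Δ * (Real.exp (q t) * B + Real.exp (qs t) * A) := by
          rw [← Finset.sum_mul]
          have hsum : ∑ s : T, (Real.exp (q t + qs s) + Real.exp (qs t + q s)) =
              Real.exp (q t) * B + Real.exp (qs t) * A := by
            rw [hAdef, hBdef, Finset.mul_sum, Finset.mul_sum, ← Finset.sum_add_distrib]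
            exact Finset.sum_congr rfl (fun s _ => by rw [Real.exp_add, Real.exp_add])
          rw [hsum]; ring
  -- divide
  have hrw2 : Real.exp (q t) / A - Real.exp (qs t) / B =
      (Real.exp (q t) * B - Real.exp (qs t) * A) / (A * B) := by
    field_simp
  rw [hrw2, abs_div, abs_of_pos (mul_pos hA hB)]
  rw [div_le_iff₀ (mul_pos hA hB)]
  calc |Real.exp (q t) * B - Real.exp (qs t) * A|
      ≤ 2 * Δ * (Real.exp (q t) * B + Real.exp (qs t) * A) := key
    _ ≤ 2 * Δ * (A * B + B * A) := by
        apply mul_le_mul_of_nonneg_left _ (by positivity)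
        have := mul_le_mul_of_nonneg_right hqA hB.le
        have := mul_le_mul_of_nonneg_right hqB hA.le
        linarith
    _ = 4 * Δ * (A * B) := by ring
end

section
/- Let X on {±1}^n satisfy P(X_S = 1^{s}) ≥ 2^{−s} for a subset S of size s, let Y be its ρ-bit-flipped version, and suppose additionally j, u ∉ S. Writing a = P(X_u=1, X_{S∪{j}} = 1^{s+1}), b = P(X_{S∪{j}} = 1^{s+1}) ≥ 2^{−(s+1)}, c = P(Y_u=1, Y_{S∪{j}}=1^{s+1}), d = P(Y_{S∪{j}}=1^{s+1}), the influence difference satisfies 2|a/b − c/d| ≤ (4 + 2^{s+3})(1 − (1−ρ)^{s+2}). -/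
open Finset

/-- Law of the vector obtained from `P` by flipping each coordinate independently
with probability `ρ`. -/
noncomputable def flipLaw (n : ℕ) (ρ : ℝ) (P : (Fin n → Bool) → ℝ)
    (y : Fin n → Bool) : ℝ :=
  ∑ x : Fin n → Bool, P x * ∏ i, (if y i = x i then 1 - ρ else ρ)

lemma sum_filter_pi {n : ℕ} (U : Finset (Fin n)) (g : Fin n → Bool → ℝ)
    (hg1 : ∀ i, g i true + g i false = 1) :
    ∑ y ∈ univ.filter (fun y : Fin n → Bool => ∀ i ∈ U, y i = true), ∏ i, g i (y i)
      = ∏ i ∈ U, g i true := by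
  classical
  set h : Fin n → Bool → ℝ := fun i b => if i ∈ U then (if b = true then g i b else 0) else g i b
    with hh
  have key : ∀ y : Fin n → Bool,
      (if (∀ i ∈ U, y i = true) then ∏ i, g i (y i) else 0) = ∏ i, h i (y i) := by
    intro y
    by_cases hy : ∀ i ∈ U, y i = true
    · rw [if_pos hy]
      refine Finset.prod_congr rfl fun i _ => ?_
      by_cases hiU : i ∈ U
      · simp [hh, hiU, hy i hiU]
      · simp [hh, hiU]
    · rw [if_neg hy]
      push_neg at hy
      obtain ⟨i, hiU, hyi⟩ := hy
      refine (Finset.prod_eq_zero (Finset.mem_univ i) ?_).symm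
      simp [hh, hiU, hyi]
  rw [Finset.sum_filter]
  calc ∑ y : Fin n → Bool, (if (∀ i ∈ U, y i = true) then ∏ i, g i (y i) else 0)
      = ∑ y : Fin n → Bool, ∏ i, h i (y i) := Finset.sum_congr rfl fun y _ => key y
    _ = ∏ i, ∑ b, h i b := (Fintype.prod_sum h).symm
    _ = ∏ i, (if i ∈ U then g i true else 1) := by
        refine Finset.prod_congr rfl fun i _ => ?_
        by_cases hiU : i ∈ U <;> simp [hh, hiU, hg1 i]
    _ = ∏ i ∈ U, g i true := by
        rw [Finset.prod_ite_mem]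
        simp

lemma flip_sum {n : ℕ} (ρ : ℝ) (P : (Fin n → Bool) → ℝ) (V : Finset (Fin n)) :
    ∑ y ∈ univ.filter (fun y : Fin n → Bool => ∀ i ∈ V, y i = true), flipLaw n ρ P y
      = ∑ x : Fin n → Bool, P x * ∏ i ∈ V, (if x i = true then 1 - ρ else ρ) := by
  classical
  simp only [flipLaw]
  rw [Finset.sum_comm]
  refine Finset.sum_congr rfl fun x _ => ?_
  rw [← Finset.mul_sum,
    sum_filter_pi V (fun i b => if b = x i then 1 - ρ else ρ) (fun i => by cases hxi : x i <;> simp [hxi])]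
  congr 1
  refine Finset.prod_congr rfl fun i _ => ?_
  cases hxi : x i <;> simp [hxi]

lemma weight_bounds {n : ℕ} {ρ : ℝ} (h0 : 0 ≤ ρ) (h1 : ρ ≤ 1) (V : Finset (Fin n))
    (x : Fin n → Bool) :
    0 ≤ ∏ i ∈ V, (if x i = true then 1 - ρ else ρ) ∧
    ∏ i ∈ V, (if x i = true then 1 - ρ else ρ) ≤ 1 := by
  constructor
  · exact Finset.prod_nonneg fun i _ => by split <;> linarith
  · exact Finset.prod_le_one (fun i _ => by split <;> linarith)
      (fun i _ => by split <;> linarith)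

lemma weight_on {n : ℕ} {ρ : ℝ} (V : Finset (Fin n)) (x : Fin n → Bool)
    (hx : ∀ i ∈ V, x i = true) :
    ∏ i ∈ V, (if x i = true then 1 - ρ else ρ) = (1 - ρ) ^ V.card := by
  rw [Finset.prod_congr rfl (fun i hi => by rw [if_pos (hx i hi)]), Finset.prod_const]

lemma weight_off {n : ℕ} {ρ : ℝ} (h0 : 0 ≤ ρ) (h1 : ρ ≤ 1) (V : Finset (Fin n))
    (x : Fin n → Bool) (hx : ¬ ∀ i ∈ V, x i = true) :
    ∏ i ∈ V, (if x i = true then 1 - ρ else ρ) ≤ ρ := by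
  push_neg at hx
  obtain ⟨i, hiV, hxi⟩ := hx
  rw [← Finset.mul_prod_erase V _ hiV, if_neg hxi]
  calc ρ * ∏ i ∈ V.erase i, (if x i = true then 1 - ρ else ρ)
      ≤ ρ * 1 := by
        refine mul_le_mul_of_nonneg_left ?_ h0
        exact Finset.prod_le_one (fun i _ => by split <;> linarith)
          (fun i _ => by split <;> linarith)
    _ = ρ := mul_one ρ

lemma sum_sandwich {n : ℕ} {ρ : ℝ} (h0 : 0 ≤ ρ) (h1 : ρ ≤ 1)
    {P : (Fin n → Bool) → ℝ} (hP0 : ∀ x, 0 ≤ P x) (hP1 : ∑ x : Fin n → Bool, P x = 1)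
    (V : Finset (Fin n)) (hV : V.Nonempty) :
    (1 - ρ) ^ V.card * (∑ x ∈ univ.filter (fun x : Fin n → Bool => ∀ i ∈ V, x i = true), P x)
      ≤ (∑ x : Fin n → Bool, P x * ∏ i ∈ V, (if x i = true then 1 - ρ else ρ)) ∧
    (∑ x : Fin n → Bool, P x * ∏ i ∈ V, (if x i = true then 1 - ρ else ρ))
      ≤ (1 - ρ) ^ V.card * (∑ x ∈ univ.filter (fun x : Fin n → Bool => ∀ i ∈ V, x i = true), P x)
        + (1 - (1 - ρ) ^ V.card) := by
  classical
  set p : (Fin n → Bool) → Prop := fun x => ∀ i ∈ V, x i = true with hp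
  have hsplit := Finset.sum_filter_add_sum_filter_not univ p
      (fun x => P x * ∏ i ∈ V, (if x i = true then 1 - ρ else ρ))
  have hon : ∑ x ∈ univ.filter p, P x * ∏ i ∈ V, (if x i = true then 1 - ρ else ρ)
      = (1 - ρ) ^ V.card * ∑ x ∈ univ.filter p, P x := by
    rw [Finset.mul_sum]
    refine Finset.sum_congr rfl fun x hx => ?_
    rw [weight_on V x (Finset.mem_filter.mp hx).2, mul_comm]
  have hρe : ρ ≤ 1 - (1 - ρ) ^ V.card := by
    have : (1 - ρ) ^ V.card ≤ 1 - ρ :=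
      pow_le_of_le_one (by linarith) (by linarith) (Finset.card_ne_zero_of_mem hV.choose_spec)
    linarith
  have hoff0 : 0 ≤ ∑ x ∈ univ.filter (fun x => ¬ p x),
      P x * ∏ i ∈ V, (if x i = true then 1 - ρ else ρ) :=
    Finset.sum_nonneg fun x _ => mul_nonneg (hP0 x) (weight_bounds h0 h1 V x).1
  have hoffub : ∑ x ∈ univ.filter (fun x => ¬ p x),
      P x * ∏ i ∈ V, (if x i = true then 1 - ρ else ρ) ≤ 1 - (1 - ρ) ^ V.card := by
    calc ∑ x ∈ univ.filter (fun x => ¬ p x),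
          P x * ∏ i ∈ V, (if x i = true then 1 - ρ else ρ)
        ≤ ∑ x ∈ univ.filter (fun x => ¬ p x), P x * (1 - (1 - ρ) ^ V.card) := by
          refine Finset.sum_le_sum fun x hx => ?_
          refine mul_le_mul_of_nonneg_left ?_ (hP0 x)
          exact le_trans (weight_off h0 h1 V x (Finset.mem_filter.mp hx).2) hρe
      _ = (∑ x ∈ univ.filter (fun x => ¬ p x), P x) * (1 - (1 - ρ) ^ V.card) := by
          rw [Finset.sum_mul]
      _ ≤ 1 * (1 - (1 - ρ) ^ V.card) := by
          refine mul_le_mul_of_nonneg_right ?_ (by linarith [hρe, h0])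
          rw [← hP1]
          exact Finset.sum_le_sum_of_subset_of_nonneg (Finset.filter_subset _ _)
            (fun x _ _ => hP0 x)
      _ = 1 - (1 - ρ) ^ V.card := one_mul _
  constructor
  · rw [← hsplit, hon]; linarith
  · rw [← hsplit, hon]; linarith

set_option maxHeartbeats 2000000 in
theorem stmt_16 (n : ℕ) (ρ : ℝ) (h0 : 0 ≤ ρ) (h1 : ρ ≤ 1)
    (P : (Fin n → Bool) → ℝ) (hP0 : ∀ x, 0 ≤ P x) (hP1 : ∑ x : Fin n → Bool, P x = 1)
    (S : Finset (Fin n)) (j u : Fin n) (hj : j ∉ S) (hu : u ∉ S) (hju : j ≠ u)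
    (a b c d : ℝ)
    (ha : a = ∑ x ∈ univ.filter
      (fun x : Fin n → Bool => x u = true ∧ ∀ i ∈ insert j S, x i = true), P x)
    (hb : b = ∑ x ∈ univ.filter
      (fun x : Fin n → Bool => ∀ i ∈ insert j S, x i = true), P x)
    (hc : c = ∑ y ∈ univ.filter
      (fun y : Fin n → Bool => y u = true ∧ ∀ i ∈ insert j S, y i = true), flipLaw n ρ P y)
    (hd : d = ∑ y ∈ univ.filter
      (fun y : Fin n → Bool => ∀ i ∈ insert j S, y i = true), flipLaw n ρ P y)
    (hblb : ((2 : ℝ) ^ (S.card + 1))⁻¹ ≤ b) :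
    2 * |a / b - c / d| ≤ (4 + 2 ^ (S.card + 3)) * (1 - (1 - ρ) ^ (S.card + 2)) := by
  classical
  set T : Finset (Fin n) := insert j S with hT
  set V : Finset (Fin n) := insert u T with hV
  have huT : u ∉ T := by
    simp only [hT, Finset.mem_insert]
    push_neg
    exact ⟨hju.symm, hu⟩
  have hTc : T.card = S.card + 1 := Finset.card_insert_of_notMem hj
  have hVc : V.card = S.card + 2 := by
    rw [hV, Finset.card_insert_of_notMem huT, hTc]
  set E₂ : ℝ := (1 - ρ) ^ (S.card + 2) with hE₂
  set E₁ : ℝ := (1 - ρ) ^ (S.card + 1) with hE₁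
  have h1ρ0 : 0 ≤ 1 - ρ := by linarith
  have h1ρ1 : 1 - ρ ≤ 1 := by linarith
  have hE₂0 : 0 ≤ E₂ := pow_nonneg h1ρ0 _
  have hE₂1 : E₂ ≤ 1 := pow_le_one₀ h1ρ0 h1ρ1
  have hE₁0 : 0 ≤ E₁ := pow_nonneg h1ρ0 _
  have hE₂₁ : E₂ ≤ E₁ := pow_le_pow_of_le_one h1ρ0 h1ρ1 (by omega)
  -- rewrite a and c over the set V
  have hfiltV : (univ.filter (fun x : Fin n → Bool => x u = true ∧ ∀ i ∈ T, x i = true))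
      = univ.filter (fun x : Fin n → Bool => ∀ i ∈ V, x i = true) := by
    refine Finset.filter_congr fun x _ => ?_
    rw [hV]
    simp only [Finset.forall_mem_insert]
  have ha' : a = ∑ x ∈ univ.filter (fun x : Fin n → Bool => ∀ i ∈ V, x i = true), P x := by
    rw [ha, hfiltV]
  have hc' : c = ∑ x : Fin n → Bool, P x * ∏ i ∈ V, (if x i = true then 1 - ρ else ρ) := by
    rw [hc, hfiltV, flip_sum]
  have hd' : d = ∑ x : Fin n → Bool, P x * ∏ i ∈ T, (if x i = true then 1 - ρ else ρ) := by
    rw [hd, flip_sum]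
  -- basic bounds
  have hb0 : (0:ℝ) < b := lt_of_lt_of_le (by positivity) hblb
  have hab : a ≤ b := by
    rw [ha', hb]
    refine Finset.sum_le_sum_of_subset_of_nonneg ?_ (fun x _ _ => hP0 x)
    intro x hx
    simp only [Finset.mem_filter, Finset.mem_univ, true_and] at hx ⊢
    intro i hi
    exact hx i (by rw [hV]; exact Finset.mem_insert_of_mem hi)
  have ha0 : 0 ≤ a := by
    rw [ha']
    exact Finset.sum_nonneg fun x _ => hP0 x
  have hb1 : b ≤ 1 := by
    rw [hb, ← hP1]
    exact Finset.sum_le_sum_of_subset_of_nonneg (Finset.filter_subset _ _) fun x _ _ => hP0 x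
  have ha1 : a ≤ 1 := le_trans hab hb1
  have hc0 : 0 ≤ c := by
    rw [hc']
    exact Finset.sum_nonneg fun x _ =>
      mul_nonneg (hP0 x) (weight_bounds h0 h1 V x).1
  have hcd : c ≤ d := by
    rw [hc', hd']
    refine Finset.sum_le_sum fun x _ => ?_
    refine mul_le_mul_of_nonneg_left ?_ (hP0 x)
    rw [hV, Finset.prod_insert huT]
    calc (if x u = true then 1 - ρ else ρ) * ∏ i ∈ T, (if x i = true then 1 - ρ else ρ)
        ≤ 1 * ∏ i ∈ T, (if x i = true then 1 - ρ else ρ) := by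
          refine mul_le_mul_of_nonneg_right (by split <;> linarith)
            (weight_bounds h0 h1 T x).1
      _ = _ := one_mul _
  -- sandwich bounds for c and d
  have hcs := sum_sandwich h0 h1 hP0 hP1 V (Finset.insert_nonempty _ _)
  rw [hVc, ← hE₂, ← ha', ← hc'] at hcs
  have hds := sum_sandwich h0 h1 hP0 hP1 T (Finset.insert_nonempty _ _)
  rw [hTc, ← hE₁, ← hb, ← hd'] at hds
  have hac : |a - c| ≤ 1 - E₂ := by
    rw [abs_le]
    constructor <;> nlinarith [hcs.1, hcs.2]
  have hbd : |b - d| ≤ 1 - E₂ := by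
    have : |b - d| ≤ 1 - E₁ := by
      rw [abs_le]
      constructor <;> nlinarith [hds.1, hds.2]
    linarith
  -- key bound: |a/b - c/d| * b ≤ 2 * (1 - E₂)
  have key : |a / b - c / d| * b ≤ 2 * (1 - E₂) := by
    rcases eq_or_lt_of_le (le_trans hc0 hcd) with hd0 | hd0
    · -- d = 0
      have hdz : d = 0 := hd0.symm
      have hcz : c = 0 := le_antisymm (hdz ▸ hcd) hc0
      have hE₁b : E₁ * b ≤ 0 := hdz ▸ hds.1
      have hE₁z : E₁ = 0 := by nlinarith [hb0, hE₁0]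
      have hρ1 : 1 - ρ = 0 := by
        have := pow_eq_zero_iff (n := S.card + 1) (by omega) |>.mp hE₁z
        exact this
      have hE₂z : E₂ = 0 := by rw [hE₂, hρ1, zero_pow (by omega)]
      rw [hdz, hcz, zero_div, sub_zero, abs_of_nonneg (div_nonneg ha0 hb0.le),
        div_mul_cancel₀ _ (ne_of_gt hb0), hE₂z]
      linarith
    · -- d > 0
      have hbd0 : (0:ℝ) < b * d := mul_pos hb0 hd0
      have habs : |a * d - c * b| ≤ d * (|a - c| + |b - d|) := by
        have h1' : a * d - c * b = (a - c) * d + c * (d - b) := by ring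
        calc |a * d - c * b| = |(a - c) * d + c * (d - b)| := by rw [h1']
          _ ≤ |(a - c) * d| + |c * (d - b)| := abs_add_le _ _
          _ = |a - c| * d + c * |b - d| := by
              rw [abs_mul, abs_mul, abs_of_nonneg hd0.le, abs_of_nonneg hc0, abs_sub_comm d b]
          _ ≤ |a - c| * d + d * |b - d| := by nlinarith [abs_nonneg (b - d)]
          _ = d * (|a - c| + |b - d|) := by ring
      have heq : |a / b - c / d| = |a * d - c * b| / (b * d) := by
        rw [div_sub_div _ _ (ne_of_gt hb0) (ne_of_gt hd0), abs_div,
          abs_of_pos hbd0, mul_comm b c]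
      rw [heq]
      rw [div_mul_eq_mul_div, div_le_iff₀ hbd0]
      calc |a * d - c * b| * b ≤ d * (|a - c| + |b - d|) * b := by
            nlinarith [abs_nonneg (a * d - c * b)]
        _ ≤ d * (2 * (1 - E₂)) * b := by nlinarith
        _ = 2 * (1 - E₂) * (b * d) := by ring
  -- finish
  set B : ℝ := (2:ℝ) ^ (S.card + 1) with hB
  have hB0 : (0:ℝ) < B := by positivity
  have hbB : 1 ≤ b * B := by
    rw [← inv_mul_cancel₀ (ne_of_gt hB0)]
    exact mul_le_mul_of_nonneg_right hblb hB0.le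
  have hpow : (2:ℝ) ^ (S.card + 3) = 4 * B := by
    rw [hB, pow_add, pow_add]; ring
  rw [hpow]
  have habsnn : 0 ≤ |a / b - c / d| := abs_nonneg _
  nlinarith [mul_le_mul_of_nonneg_right key hB0.le, mul_le_mul_of_nonneg_right hbB habsnn,
    mul_nonneg habsnn hB0.le, hE₂1]
end

section
/- Let p be a probability distribution on {±1}^n and ε_p, its L_p distance to another distribution q, satisfy ε_p ≤ τ / 2^{2+n(1−1/p)} for some τ > 0 and real p ≥ 1. Then for all coordinates u, v and any subset S ⊆ [n]∖{u,v}, the average conditional covariances satisfy |Cov^{avg}_p(u,v ∣ S) − Cov^{avg}_q(u,v ∣ S)| ≤ τ, where Cov^{avg}(u,v∣S) = ∑_{x_u,x_v} x_u x_v P(x_u,x_v) − ∑_{x_u,x_v,x_S} x_u x_v P(x_u ∣ x_S) P(x_v, x_S), provided all conditioning events have positive probability under p. -/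
open Finset
open scoped Classical

noncomputable section

/-- The value `±1` of a spin represented by a Boolean. -/
def pm1 (b : Bool) : ℝ := if b then 1 else -1

/-- Marginal probability of the configuration `y` on the coordinates in `S`. -/
def margS {n : ℕ} (p : (Fin n → Bool) → ℝ) (S : Finset (Fin n))
    (y : {i // i ∈ S} → Bool) : ℝ :=
  ∑ x : Fin n → Bool, if ∀ i, ∀ h : i ∈ S, x i = y ⟨i, h⟩ then p x else 0

/-- Joint probability of `X_u = a` together with the configuration `y` on `S`. -/
def jointUS {n : ℕ} (p : (Fin n → Bool) → ℝ) (u : Fin n) (a : Bool)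
    (S : Finset (Fin n)) (y : {i // i ∈ S} → Bool) : ℝ :=
  ∑ x : Fin n → Bool, if x u = a ∧ ∀ i, ∀ h : i ∈ S, x i = y ⟨i, h⟩ then p x else 0

/-- Pairwise marginal probability of `X_u = a, X_v = b`. -/
def joint2 {n : ℕ} (p : (Fin n → Bool) → ℝ) (u v : Fin n) (a b : Bool) : ℝ :=
  ∑ x : Fin n → Bool, if x u = a ∧ x v = b then p x else 0

/-- Average conditional covariance
`Cov^avg(u,v∣S) = ∑ x_u x_v P(x_u,x_v) − ∑ x_u x_v P(x_u∣x_S) P(x_v,x_S)`. -/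
def covAvg {n : ℕ} (p : (Fin n → Bool) → ℝ) (u v : Fin n) (S : Finset (Fin n)) : ℝ :=
  (∑ a : Bool, ∑ b : Bool, pm1 a * pm1 b * joint2 p u v a b) -
    ∑ a : Bool, ∑ b : Bool, ∑ y : {i // i ∈ S} → Bool,
      pm1 a * pm1 b * (jointUS p u a S y / margS p S y) * jointUS p v b S y

lemma abs_pm1 (a : Bool) : |pm1 a| = 1 := by cases a <;> simp [pm1]

lemma jointUS_nonneg {n : ℕ} {p : (Fin n → Bool) → ℝ} (hp0 : ∀ x, 0 ≤ p x)
    (u : Fin n) (a : Bool) (S : Finset (Fin n)) (y : {i // i ∈ S} → Bool) :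
    0 ≤ jointUS p u a S y := by
  apply Finset.sum_nonneg; intro x _; split
  · exact hp0 x
  · exact le_refl 0


lemma sum_jointUS {n : ℕ} (p : (Fin n → Bool) → ℝ) (u : Fin n)
    (S : Finset (Fin n)) (y : {i // i ∈ S} → Bool) :
    ∑ a : Bool, jointUS p u a S y = margS p S y := by
  unfold jointUS margS
  rw [Finset.sum_comm]
  refine Finset.sum_congr rfl fun x _ => ?_
  by_cases h : ∀ i, ∀ h : i ∈ S, x i = y ⟨i, h⟩ <;> cases hxu : x u <;> simp [h, hxu]

-- condition equivalent to equality of restrictions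
lemma cond_iff {n : ℕ} (S : Finset (Fin n)) (x : Fin n → Bool) (y : {i // i ∈ S} → Bool) :
    (∀ i, ∀ h : i ∈ S, x i = y ⟨i, h⟩) ↔ (fun j : {i // i ∈ S} => x j.1) = y := by
  constructor
  · intro h; funext j; exact h j.1 j.2
  · intro h i hi; exact congrFun h ⟨i, hi⟩

lemma sum_y_marg {n : ℕ} (S : Finset (Fin n)) (x : Fin n → Bool) (c : ℝ) :
    ∑ y : {i // i ∈ S} → Bool,
      (if ∀ i, ∀ h : i ∈ S, x i = y ⟨i, h⟩ then c else 0) = c := by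
  have : ∀ y : {i // i ∈ S} → Bool,
      (if ∀ i, ∀ h : i ∈ S, x i = y ⟨i, h⟩ then c else 0)
      = if (fun j : {i // i ∈ S} => x j.1) = y then c else 0 := by
    intro y; simp [cond_iff]
  simp only [this]
  simp

variable {n : ℕ} {p q : (Fin n → Bool) → ℝ}

lemma joint2_diff_bound (u v : Fin n) :
    ∑ a : Bool, ∑ b : Bool, |joint2 p u v a b - joint2 q u v a b|
      ≤ ∑ x : Fin n → Bool, |p x - q x| := by
  have h1 : ∀ a b : Bool, |joint2 p u v a b - joint2 q u v a b|
      ≤ ∑ x : Fin n → Bool, if x u = a ∧ x v = b then |p x - q x| else 0 := by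
    intro a b
    unfold joint2
    rw [← Finset.sum_sub_distrib]
    refine (Finset.abs_sum_le_sum_abs _ _).trans_eq ?_
    refine Finset.sum_congr rfl fun x _ => ?_
    split <;> simp
  calc ∑ a : Bool, ∑ b : Bool, |joint2 p u v a b - joint2 q u v a b|
      ≤ ∑ a : Bool, ∑ b : Bool, ∑ x : Fin n → Bool,
          if x u = a ∧ x v = b then |p x - q x| else 0 := by
        refine Finset.sum_le_sum fun a _ => Finset.sum_le_sum fun b _ => h1 a b
    _ = ∑ x : Fin n → Bool, |p x - q x| := by
        refine Eq.trans (Finset.sum_congr rfl fun a _ => Finset.sum_comm) ?_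
        rw [Finset.sum_comm]
        refine Finset.sum_congr rfl fun x _ => ?_
        cases hxu : x u <;> cases hxv : x v <;> simp [hxu, hxv]

lemma margS_diff_bound (S : Finset (Fin n)) :
    ∑ y : {i // i ∈ S} → Bool, |margS p S y - margS q S y|
      ≤ ∑ x : Fin n → Bool, |p x - q x| := by
  have h1 : ∀ y : {i // i ∈ S} → Bool, |margS p S y - margS q S y|
      ≤ ∑ x : Fin n → Bool,
          if ∀ i, ∀ h : i ∈ S, x i = y ⟨i, h⟩ then |p x - q x| else 0 := by
    intro y
    unfold margS
    rw [← Finset.sum_sub_distrib]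
    refine (Finset.abs_sum_le_sum_abs _ _).trans_eq ?_
    refine Finset.sum_congr rfl fun x _ => ?_
    split <;> simp
  calc ∑ y : {i // i ∈ S} → Bool, |margS p S y - margS q S y|
      ≤ ∑ y : {i // i ∈ S} → Bool, ∑ x : Fin n → Bool,
          if ∀ i, ∀ h : i ∈ S, x i = y ⟨i, h⟩ then |p x - q x| else 0 :=
        Finset.sum_le_sum fun y _ => h1 y
    _ = ∑ x : Fin n → Bool, |p x - q x| := by
        rw [Finset.sum_comm]
        exact Finset.sum_congr rfl fun x _ => sum_y_marg S x _

lemma jointUS_diff_bound (u : Fin n) (S : Finset (Fin n)) :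
    ∑ a : Bool, ∑ y : {i // i ∈ S} → Bool,
        |jointUS p u a S y - jointUS q u a S y|
      ≤ ∑ x : Fin n → Bool, |p x - q x| := by
  have h1 : ∀ (a : Bool) (y : {i // i ∈ S} → Bool),
      |jointUS p u a S y - jointUS q u a S y|
      ≤ ∑ x : Fin n → Bool,
          if x u = a ∧ ∀ i, ∀ h : i ∈ S, x i = y ⟨i, h⟩ then |p x - q x| else 0 := by
    intro a y
    unfold jointUS
    rw [← Finset.sum_sub_distrib]
    refine (Finset.abs_sum_le_sum_abs _ _).trans_eq ?_
    refine Finset.sum_congr rfl fun x _ => ?_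
    split <;> simp
  calc ∑ a : Bool, ∑ y : {i // i ∈ S} → Bool,
        |jointUS p u a S y - jointUS q u a S y|
      ≤ ∑ a : Bool, ∑ y : {i // i ∈ S} → Bool, ∑ x : Fin n → Bool,
          if x u = a ∧ ∀ i, ∀ h : i ∈ S, x i = y ⟨i, h⟩ then |p x - q x| else 0 :=
        Finset.sum_le_sum fun a _ => Finset.sum_le_sum fun y _ => h1 a y
    _ = ∑ x : Fin n → Bool, |p x - q x| := by
        refine Eq.trans (Finset.sum_congr rfl fun a _ => Finset.sum_comm) ?_
        rw [Finset.sum_comm]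
        refine Finset.sum_congr rfl fun x _ => ?_
        have : ∀ (a : Bool) (y : {i // i ∈ S} → Bool),
            (if x u = a ∧ ∀ i, ∀ h : i ∈ S, x i = y ⟨i, h⟩ then |p x - q x| else 0)
            = if x u = a then (if ∀ i, ∀ h : i ∈ S, x i = y ⟨i, h⟩ then |p x - q x| else 0) else 0 := by
          intro a y; by_cases h : x u = a <;> simp [h]
        simp only [this]
        cases hxu : x u <;> simp [hxu, sum_y_marg S x]

-- Core pointwise ratio bound
lemma ratio_term_bound {A B C D E F : ℝ} (hB : 0 < B) (hA : 0 ≤ A)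
    (hF : 0 ≤ F) (hFD : F ≤ D) :
    |A / B * E - C / D * F| ≤ A / B * |E - F| + (A / B * |B - D| + |A - C|) * (F / D) := by
  rcases eq_or_lt_of_le (hF.trans hFD) with hD | hD
  · -- D = 0, hence F = 0
    have hF0 : F = 0 := le_antisymm (hFD.trans_eq hD.symm) hF
    have hAB : 0 ≤ A / B := div_nonneg hA hB.le
    rw [hF0, ← hD]
    simp [abs_mul, abs_of_nonneg hAB]
  · -- D > 0
    have key : A / B * E - C / D * F = A / B * (E - F) + (A * (D - B) / B + (A - C)) * (F / D) := by
      field_simp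
      ring
    rw [key]
    refine (abs_add_le _ _).trans ?_
    gcongr
    · rw [abs_mul, abs_of_nonneg (div_nonneg hA hB.le)]
    · rw [abs_mul, abs_of_nonneg (div_nonneg hF hD.le)]
      gcongr
      refine (abs_add_le _ _).trans ?_
      gcongr
      rw [abs_div, abs_of_pos hB, abs_mul, abs_of_nonneg hA, abs_sub_comm]
      exact le_of_eq (by ring)

-- per-configuration bound
lemma per_y_bound {A C : Bool → ℝ} {E F : Bool → ℝ} {B D : ℝ}
    (hB : 0 < B) (hA : ∀ a, 0 ≤ A a) (hF : ∀ b, 0 ≤ F b)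
    (hAB : ∑ a : Bool, A a = B) (hFD : ∑ b : Bool, F b = D) :
    ∑ a : Bool, ∑ b : Bool, |A a / B * E b - C a / D * F b|
      ≤ (∑ b : Bool, |E b - F b|) + |B - D| + ∑ a : Bool, |A a - C a| := by
  have hFD' : ∀ b, F b ≤ D := by
    intro b
    rw [← hFD]
    cases b <;> simp [Finset.sum_le_sum, hF true, hF false] <;> nlinarith [hF true, hF false]
  have hD0 : 0 ≤ D := by rw [← hFD]; exact Finset.sum_nonneg fun b _ => hF b
  have step : ∑ a : Bool, ∑ b : Bool, |A a / B * E b - C a / D * F b|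
      ≤ ∑ a : Bool, ∑ b : Bool,
          (A a / B * |E b - F b| + (A a / B * |B - D| + |A a - C a|) * (F b / D)) :=
    Finset.sum_le_sum fun a _ => Finset.sum_le_sum fun b _ =>
      ratio_term_bound hB (hA a) (hF b) (hFD' b)
  refine step.trans ?_
  have hsum1 : ∑ a : Bool, A a / B = 1 := by
    rw [← Finset.sum_div, hAB, div_self hB.ne']
  have hsum2 : ∑ b : Bool, F b / D ≤ 1 := by
    rw [← Finset.sum_div, hFD]
    rcases eq_or_lt_of_le hD0 with h | h
    · simp [← h]
    · rw [div_self h.ne']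
  have expand : ∑ a : Bool, ∑ b : Bool,
      (A a / B * |E b - F b| + (A a / B * |B - D| + |A a - C a|) * (F b / D))
      = (∑ a : Bool, A a / B) * (∑ b : Bool, |E b - F b|)
        + (∑ a : Bool, (A a / B * |B - D| + |A a - C a|)) * (∑ b : Bool, F b / D) := by
    simp only [Finset.sum_add_distrib, ← Finset.sum_mul, ← Finset.mul_sum]
  rw [expand, hsum1, one_mul]
  have h2 : (∑ a : Bool, (A a / B * |B - D| + |A a - C a|)) * (∑ b : Bool, F b / D)
      ≤ |B - D| + ∑ a : Bool, |A a - C a| := by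
    have hnn : 0 ≤ ∑ a : Bool, (A a / B * |B - D| + |A a - C a|) :=
      Finset.sum_nonneg fun a _ => add_nonneg
        (mul_nonneg (div_nonneg (hA a) hB.le) (abs_nonneg _)) (abs_nonneg _)
    calc (∑ a : Bool, (A a / B * |B - D| + |A a - C a|)) * (∑ b : Bool, F b / D)
        ≤ (∑ a : Bool, (A a / B * |B - D| + |A a - C a|)) * 1 :=
          mul_le_mul_of_nonneg_left hsum2 hnn
      _ = |B - D| + ∑ a : Bool, |A a - C a| := by
          rw [mul_one, Finset.sum_add_distrib, ← Finset.sum_mul, hsum1, one_mul]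
  linarith

lemma l1_le_rpow {n : ℕ} (r : ℝ) (hr : 1 ≤ r) (f : (Fin n → Bool) → ℝ) :
    ∑ x : Fin n → Bool, |f x|
      ≤ 2 ^ ((n : ℝ) * (1 - 1 / r)) * (∑ x : Fin n → Bool, |f x| ^ r) ^ (1 / r) := by
  have h := Real.inner_le_weight_mul_Lp_of_nonneg (Finset.univ : Finset (Fin n → Bool))
    hr (fun _ => 1) (fun x => |f x|) (fun _ => zero_le_one) (fun x => abs_nonneg _)
  simp only [one_mul] at h
  have hcard : (∑ _x : Fin n → Bool, (1 : ℝ)) = (2 ^ n : ℕ) := by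
    rw [Finset.sum_const, Finset.card_univ]
    simp [Fintype.card_fun]
  rw [hcard] at h
  have h2 : ((2 ^ n : ℕ) : ℝ) ^ (1 - r⁻¹) = 2 ^ ((n : ℝ) * (1 - 1 / r)) := by
    push_cast
    rw [← Real.rpow_natCast (2 : ℝ) n, ← Real.rpow_mul (by norm_num), one_div]
  refine h.trans_eq ?_
  rw [h2, one_div]

theorem stmt_19 (n : ℕ) (p q : (Fin n → Bool) → ℝ) (r εp τ : ℝ)
    (hr : 1 ≤ r) (hτ : 0 < τ)
    (hp0 : ∀ x, 0 ≤ p x) (hq0 : ∀ x, 0 ≤ q x)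
    (hp1 : ∑ x : Fin n → Bool, p x = 1) (hq1 : ∑ x : Fin n → Bool, q x = 1)
    (hdist : (∑ x : Fin n → Bool, |p x - q x| ^ r) ^ (1 / r) ≤ εp)
    (hεp : εp ≤ τ / 2 ^ ((2 : ℝ) + (n : ℝ) * (1 - 1 / r)))
    (u v : Fin n) (huv : u ≠ v) (S : Finset (Fin n)) (hu : u ∉ S) (hv : v ∉ S)
    (hpos : ∀ y : {i // i ∈ S} → Bool, 0 < margS p S y) :
    |covAvg p u v S - covAvg q u v S| ≤ τ := by
  set ε : ℝ := ∑ x : Fin n → Bool, |p x - q x| with hε_def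
  -- Step 1: ε ≤ 2 ^ (n (1 - 1/r)) * εp
  have hεbound : ε ≤ 2 ^ ((n : ℝ) * (1 - 1 / r)) * εp := by
    refine (l1_le_rpow r hr (fun x => p x - q x)).trans ?_
    have h2pos : (0 : ℝ) < 2 ^ ((n : ℝ) * (1 - 1 / r)) := Real.rpow_pos_of_pos (by norm_num) _
    exact mul_le_mul_of_nonneg_left hdist h2pos.le
  -- Step 2: T1 bound
  have hT1 : |(∑ a : Bool, ∑ b : Bool, pm1 a * pm1 b * joint2 p u v a b)
      - ∑ a : Bool, ∑ b : Bool, pm1 a * pm1 b * joint2 q u v a b| ≤ ε := by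
    rw [← Finset.sum_sub_distrib]
    refine (Finset.abs_sum_le_sum_abs _ _).trans ?_
    calc ∑ a : Bool, |∑ b : Bool, pm1 a * pm1 b * joint2 p u v a b
            - ∑ b : Bool, pm1 a * pm1 b * joint2 q u v a b|
        ≤ ∑ a : Bool, ∑ b : Bool, |joint2 p u v a b - joint2 q u v a b| := by
          refine Finset.sum_le_sum fun a _ => ?_
          rw [← Finset.sum_sub_distrib]
          refine (Finset.abs_sum_le_sum_abs _ _).trans (le_of_eq ?_)
          refine Finset.sum_congr rfl fun b _ => ?_
          rw [← mul_sub, abs_mul, abs_mul, abs_pm1, abs_pm1, one_mul, one_mul]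
      _ ≤ ε := joint2_diff_bound u v
  -- Step 3: T2 bound
  have hT2 : |(∑ a : Bool, ∑ b : Bool, ∑ y : {i // i ∈ S} → Bool,
        pm1 a * pm1 b * (jointUS p u a S y / margS p S y) * jointUS p v b S y)
      - ∑ a : Bool, ∑ b : Bool, ∑ y : {i // i ∈ S} → Bool,
        pm1 a * pm1 b * (jointUS q u a S y / margS q S y) * jointUS q v b S y| ≤ 3 * ε := by
    rw [← Finset.sum_sub_distrib]
    refine (Finset.abs_sum_le_sum_abs _ _).trans ?_
    have step1 : ∀ a : Bool,
        |(∑ b : Bool, ∑ y : {i // i ∈ S} → Bool,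
            pm1 a * pm1 b * (jointUS p u a S y / margS p S y) * jointUS p v b S y)
          - ∑ b : Bool, ∑ y : {i // i ∈ S} → Bool,
            pm1 a * pm1 b * (jointUS q u a S y / margS q S y) * jointUS q v b S y|
        ≤ ∑ b : Bool, ∑ y : {i // i ∈ S} → Bool,
            |jointUS p u a S y / margS p S y * jointUS p v b S y
              - jointUS q u a S y / margS q S y * jointUS q v b S y| := by
      intro a
      rw [← Finset.sum_sub_distrib]
      refine (Finset.abs_sum_le_sum_abs _ _).trans ?_
      refine Finset.sum_le_sum fun b _ => ?_
      rw [← Finset.sum_sub_distrib]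
      refine (Finset.abs_sum_le_sum_abs _ _).trans (le_of_eq ?_)
      refine Finset.sum_congr rfl fun y _ => ?_
      have : pm1 a * pm1 b * (jointUS p u a S y / margS p S y) * jointUS p v b S y
          - pm1 a * pm1 b * (jointUS q u a S y / margS q S y) * jointUS q v b S y
          = pm1 a * pm1 b * (jointUS p u a S y / margS p S y * jointUS p v b S y
              - jointUS q u a S y / margS q S y * jointUS q v b S y) := by ring
      rw [this, abs_mul, abs_mul, abs_pm1, abs_pm1, one_mul, one_mul]
    refine le_trans (Finset.sum_le_sum fun a _ => step1 a) ?_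
    -- reorganize sums: ∑ a ∑ b ∑ y → ∑ y ∑ a ∑ b
    have reorg : ∑ a : Bool, ∑ b : Bool, ∑ y : {i // i ∈ S} → Bool,
        |jointUS p u a S y / margS p S y * jointUS p v b S y
          - jointUS q u a S y / margS q S y * jointUS q v b S y|
        = ∑ y : {i // i ∈ S} → Bool, ∑ a : Bool, ∑ b : Bool,
        |jointUS p u a S y / margS p S y * jointUS p v b S y
          - jointUS q u a S y / margS q S y * jointUS q v b S y| := by
      refine Eq.trans (Finset.sum_congr rfl fun a _ => Finset.sum_comm) ?_
      rw [Finset.sum_comm]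
    rw [reorg]
    have peryy : ∀ y : {i // i ∈ S} → Bool,
        ∑ a : Bool, ∑ b : Bool,
          |jointUS p u a S y / margS p S y * jointUS p v b S y
            - jointUS q u a S y / margS q S y * jointUS q v b S y|
        ≤ (∑ b : Bool, |jointUS p v b S y - jointUS q v b S y|)
          + |margS p S y - margS q S y|
          + ∑ a : Bool, |jointUS p u a S y - jointUS q u a S y| := by
      intro y
      exact per_y_bound (hpos y) (fun a => jointUS_nonneg hp0 u a S y)
        (fun b => jointUS_nonneg hq0 v b S y)
        (sum_jointUS p u S y) (sum_jointUS q v S y)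
    refine le_trans (Finset.sum_le_sum fun y _ => peryy y) ?_
    rw [Finset.sum_add_distrib, Finset.sum_add_distrib]
    have b1 : ∑ y : {i // i ∈ S} → Bool, ∑ b : Bool,
        |jointUS p v b S y - jointUS q v b S y| ≤ ε := by
      rw [Finset.sum_comm]; exact jointUS_diff_bound v S
    have b2 : ∑ y : {i // i ∈ S} → Bool, |margS p S y - margS q S y| ≤ ε :=
      margS_diff_bound S
    have b3 : ∑ y : {i // i ∈ S} → Bool, ∑ a : Bool,
        |jointUS p u a S y - jointUS q u a S y| ≤ ε := by
      rw [Finset.sum_comm]; exact jointUS_diff_bound u S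
    linarith
  -- Step 4: combine
  have hcomb : |covAvg p u v S - covAvg q u v S| ≤ 4 * ε := by
    have : covAvg p u v S - covAvg q u v S
        = ((∑ a : Bool, ∑ b : Bool, pm1 a * pm1 b * joint2 p u v a b)
            - ∑ a : Bool, ∑ b : Bool, pm1 a * pm1 b * joint2 q u v a b)
          - ((∑ a : Bool, ∑ b : Bool, ∑ y : {i // i ∈ S} → Bool,
              pm1 a * pm1 b * (jointUS p u a S y / margS p S y) * jointUS p v b S y)
            - ∑ a : Bool, ∑ b : Bool, ∑ y : {i // i ∈ S} → Bool,
              pm1 a * pm1 b * (jointUS q u a S y / margS q S y) * jointUS q v b S y) := by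
      unfold covAvg; ring
    rw [this]
    refine (abs_sub _ _).trans ?_
    linarith
  refine hcomb.trans ?_
  have h2pos : (0 : ℝ) < 2 ^ ((n : ℝ) * (1 - 1 / r)) := Real.rpow_pos_of_pos (by norm_num) _
  have hfin : (4 : ℝ) * (2 ^ ((n : ℝ) * (1 - 1 / r)) * εp) ≤ τ := by
    have h2pos' : (0 : ℝ) < 2 ^ ((2 : ℝ) + (n : ℝ) * (1 - 1 / r)) :=
      Real.rpow_pos_of_pos (by norm_num) _
    have h4 : (2:ℝ) ^ (2:ℝ) = 4 := by norm_num
    have key : (4 : ℝ) * 2 ^ ((n : ℝ) * (1 - 1 / r)) = 2 ^ ((2 : ℝ) + (n : ℝ) * (1 - 1 / r)) := by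
      rw [Real.rpow_add (by norm_num : (0:ℝ) < 2), h4]
    rw [← mul_assoc, key]
    calc (2 : ℝ) ^ ((2 : ℝ) + (n : ℝ) * (1 - 1 / r)) * εp
        ≤ 2 ^ ((2 : ℝ) + (n : ℝ) * (1 - 1 / r)) * (τ / 2 ^ ((2 : ℝ) + (n : ℝ) * (1 - 1 / r))) :=
          mul_le_mul_of_nonneg_left hεp h2pos'.le
      _ = τ := by field_simp
  calc (4 : ℝ) * ε ≤ 4 * (2 ^ ((n : ℝ) * (1 - 1 / r)) * εp) := by linarith
    _ ≤ τ := hfin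

end
end
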